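/- For a strong composition α, κ_α is a sum of exactly two fundamental slide polynomials, κ_α = 𝔉_α + 𝔉_β with β ≠ α, if and only if α has exactly one inversion (i, i+1) and α_{i+1} = α_i + 1; and in that case β = sort(α), the weakly decreasing rearrangement of α. -/

import Mathlib

/-- `b` dominates `a`: every partial sum of `b` is at least that of `a`. -/
def Dominates (b a : List ℕ) : Prop :=
  ∀ i : ℕ, (a.take i).sum ≤ (b.take i).sum

/-- `flatten a` removes the zero parts of a weak composition. -/
def Flatten (a : List ℕ) : List ℕ := a.filter (· != 0)

/-- `β` refines `α`: `β` decomposes into consecutive nonempty blocks whose sums give `α`. -/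
def Refines (β α : List ℕ) : Prop :=
  ∃ L : List (List ℕ), (∀ l ∈ L, l ≠ []) ∧ L.flatten = β ∧ L.map List.sum = α

/-- The set of inversions of a composition: pairs `i < j` with `α i < α j`. -/
def invSet (α : List ℕ) : Finset (Fin α.length × Fin α.length) :=
  Finset.univ.filter fun p => p.1 < p.2 ∧ α.get p.1 < α.get p.2

/-- Kohnert tableau of content `a`, encoded as a filling `T : (row, col) → entry`,
with `0` meaning an empty position, rows and columns indexed from `1`. -/
def IsKohnert (a : List ℕ) (T : ℕ × ℕ → ℕ) : Prop :=
  -- cells live at positive coordinates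
  (∀ r c, T (r, c) ≠ 0 → 1 ≤ r ∧ 1 ≤ c) ∧
  -- entries are among 1,…,ℓ
  (∀ r c, T (r, c) ≠ 0 → 1 ≤ T (r, c) ∧ T (r, c) ≤ a.length) ∧
  -- (i) for each i there is exactly one i in each column 1,…,aᵢ and none beyond
  (∀ i, 1 ≤ i → i ≤ a.length → ∀ c, 1 ≤ c →
    (c ≤ a.getD (i - 1) 0 → ∃! r, T (r, c) = i) ∧
    (a.getD (i - 1) 0 < c → ∀ r, T (r, c) ≠ i)) ∧
  -- (ii) each entry in row r is at least r
  (∀ r c, T (r, c) ≠ 0 → r ≤ T (r, c)) ∧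
  -- (iii) the cells filled with a given entry weakly descend from left to right
  (∀ r c r' c', T (r, c) ≠ 0 → T (r, c) = T (r', c') → c < c' → r' ≤ r) ∧
  -- (iv) if i < j share a column with i above j, there is an i in the next column,
  -- strictly above the cell containing j
  (∀ r r' c, T (r, c) ≠ 0 → T (r', c) ≠ 0 → T (r, c) < T (r', c) → r' < r →
    ∃ r'', r' < r'' ∧ T (r'', c + 1) = T (r, c))

/-- Quasi-Yamanouchi Kohnert tableau: additionally (v) every nonempty row `r` contains
the entry `r`, or has a cell in row `r+1` weakly right of one of its cells. -/
def IsQYKohnert (a : List ℕ) (T : ℕ × ℕ → ℕ) : Prop :=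
  IsKohnert a T ∧
  ∀ r, 1 ≤ r → (∃ c, T (r, c) ≠ 0) →
    ((∃ c, T (r, c) = r) ∨ ∃ c c', T (r, c) ≠ 0 ∧ T (r + 1, c') ≠ 0 ∧ c ≤ c')

/-- The weight of a filling: the list recording the number of cells in each row `1,…,ℓ`. -/
def wtList (a : List ℕ) (T : ℕ × ℕ → ℕ) : List ℕ :=
  (List.range a.length).map fun r =>
    ((Finset.Icc 1 a.sum).filter fun c => T (r + 1, c) ≠ 0).card

open Classical in
/-- Coefficient of the monomial `x^b` in the fundamental slide polynomial `𝔉_a`. -/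
noncomputable def fundCoeff (a b : List ℕ) : ℕ :=
  if b.length = a.length ∧ Dominates b a ∧ Refines (Flatten b) (Flatten a) then 1 else 0

/-- Coefficient of the monomial `x^b` in the key polynomial `κ_a`:
the number of Kohnert tableaux of content `a` and weight `b`. -/
noncomputable def keyCoeff (a b : List ℕ) : ℕ :=
  Set.ncard {T : ℕ × ℕ → ℕ | IsKohnert a T ∧ wtList a T = b}

/-- The basic filling of content `a`: `aᵢ` cells filled with `i` in row `i`, columns `1,…,aᵢ`. -/
def basicFilling (a : List ℕ) : ℕ × ℕ → ℕ := fun p =>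
  if 1 ≤ p.1 ∧ p.1 ≤ a.length ∧ 1 ≤ p.2 ∧ p.2 ≤ a.getD (p.1 - 1) 0 then p.1 else 0

/-- `κ_α` is multiplicity free in the fundamental slide basis: quasi-Yamanouchi
Kohnert tableaux of content `α` have pairwise distinct weights. -/
def MultFree (α : List ℕ) : Prop :=
  ∀ T₁ T₂ : ℕ × ℕ → ℕ, IsQYKohnert α T₁ → IsQYKohnert α T₂ →
    wtList α T₁ = wtList α T₂ → T₁ = T₂

/-! For a strong composition `α`, `𝔉_α` is the single monomial `x^α` (a refinement of `α` of
the same length is `α` itself), so `κ_α = 𝔉_α + 𝔉_β` says that `α` has exactly two Kohnert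
tableaux: the basic filling and one of weight `β`.

If `αₚ < αₚ₊₁`, lowering the last cell of the entry `p + 1` to row `p` gives a non-basic
tableau. Variants of this move (at a second ascent; of two cells when the gap exceeds `1`; to a
row `j < i` with `αⱼ = αᵢ`; a chain of two moves when `αᵢ₊₂ = αᵢ₊₁`) yield a second non-basic
tableau unless `(i, i + 1)` is the only inversion and `αᵢ₊₁ = αᵢ + 1`. Conversely, under that
condition every cell is forced except the last cell of `i + 1`, which sits in row `i` or
`i + 1`; so there are exactly two tableaux, and the second has weight `sort(α)`, which is `α`
with `αᵢ, αᵢ₊₁` swapped. -/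

theorem refines_refl (a : List ℕ) : Refines a a := by
  induction a with
  | nil => exact ⟨[], by simp, rfl, rfl⟩
  | cons x t ih =>
    obtain ⟨L, hne, hflat, hsum⟩ := ih
    exact ⟨[x] :: L, by simpa using hne, by simp [hflat], by simp [hsum]⟩

theorem Refines.eq_of_length_le {β α : List ℕ} (h : Refines β α) (hlen : β.length ≤ α.length) :
    β = α := by
  obtain ⟨L, hne, rfl, rfl⟩ := h
  rw [List.length_map] at hlen
  induction L with
  | nil => rfl
  | cons l L ih =>
    have hl : 1 ≤ l.length := List.length_pos_iff.mpr (hne l (by simp))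
    have hL : L.length ≤ L.flatten.length := by
      rw [List.length_flatten]
      simpa using List.length_le_sum_of_one_le (L.map List.length)
        (by simpa [Nat.one_le_iff_ne_zero] using fun l hl => hne l (by simp [hl]))
    simp only [List.flatten_cons, List.length_append, List.length_cons] at hlen
    obtain ⟨x, rfl⟩ := List.length_eq_one_iff.mp (show l.length = 1 by omega)
    simp [ih (fun l hl => hne l (by simp [hl])) (by omega)]

theorem flatten_eq_self {a : List ℕ} (ha : ∀ x ∈ a, 0 < x) : Flatten a = a :=
  List.filter_eq_self.mpr fun x hx => by simpa using (ha x hx).ne'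

theorem fundCoeff_self (β : List ℕ) : fundCoeff β β = 1 :=
  if_pos ⟨rfl, fun _ => le_rfl, refines_refl _⟩

theorem fundCoeff_of_pos {a : List ℕ} (ha : ∀ x ∈ a, 0 < x) (b : List ℕ) :
    fundCoeff a b = if b = a then 1 else 0 := by
  by_cases hba : b = a
  · rw [if_pos hba, hba, fundCoeff_self]
  rw [if_neg hba, fundCoeff, if_neg]
  rintro ⟨hlen, -, href⟩
  rw [flatten_eq_self ha] at href
  have hsub : (Flatten b).Sublist b := List.filter_sublist
  have hfa : Flatten b = a := href.eq_of_length_le (hlen ▸ hsub.length_le)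
  exact hba (hfa ▸ (hsub.eq_of_length (by rw [hfa, hlen])).symm)

/-- Parts indexed from `1`, like the entries and rows of Kohnert tableaux; `0` past the end
and, since `0 - 1 = 0`, `part α 0 = part α 1`. -/
def part (α : List ℕ) (j : ℕ) : ℕ := α.getD (j - 1) 0

theorem part_eq_zero {α : List ℕ} {j : ℕ} (h : α.length < j) : part α j = 0 :=
  List.getD_eq_default _ _ (by omega)

theorem getD_eq_part (α : List ℕ) (t : ℕ) : α.getD t 0 = part α (t + 1) := rfl

theorem part_le_sum (α : List ℕ) (j : ℕ) : part α j ≤ α.sum := by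
  unfold part
  rcases lt_or_ge (j - 1) α.length with h | h
  · rw [List.getD_eq_getElem _ _ h]
    exact List.le_sum_of_mem (List.getElem_mem h)
  · rw [List.getD_eq_default _ _ h]
    exact Nat.zero_le _

theorem part_pos {α : List ℕ} (hpos : ∀ x ∈ α, 0 < x) {j : ℕ} (hj : 1 ≤ j)
    (hjl : j ≤ α.length) : 0 < part α j := by
  unfold part
  rw [List.getD_eq_getElem _ _ (by omega)]
  exact hpos _ (List.getElem_mem _)

/-- The entry `j` of a Kohnert tableau of content `α` occupies the columns `1,…,αⱼ`. -/
def IsCell (α : List ℕ) (j c : ℕ) : Prop := 1 ≤ j ∧ j ≤ α.length ∧ 1 ≤ c ∧ c ≤ part α j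

/-! A filling is encoded by its *row function*: `f j c` is the row of the entry `j` in
column `c`. -/

def IsColInjective (α : List ℕ) (f : ℕ → ℕ → ℕ) : Prop :=
  ∀ j j' c, IsCell α j c → IsCell α j' c → f j c = f j' c → j = j'

/-- Row functions whose columns increase upwards; they give Kohnert tableaux in which
condition (iv) is vacuous. -/
structure IsRowFn (α : List ℕ) (f : ℕ → ℕ → ℕ) : Prop where
  one_le : ∀ j c, IsCell α j c → 1 ≤ f j c
  le_self : ∀ j c, IsCell α j c → f j c ≤ j
  antitone : ∀ j c c', IsCell α j c → IsCell α j c' → c ≤ c' → f j c' ≤ f j c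
  strictMono : ∀ j j' c, IsCell α j c → IsCell α j' c → j < j' → f j c < f j' c

theorem IsRowFn.isColInjective {α : List ℕ} {f : ℕ → ℕ → ℕ} (hf : IsRowFn α f) :
    IsColInjective α f := by
  intro j j' c hj hj' heq
  rcases lt_trichotomy j j' with h | h | h
  · exact absurd heq (hf.strictMono j j' c hj hj' h).ne
  · exact h
  · exact absurd heq (hf.strictMono j' j c hj' hj h).ne'

open Classical in
noncomputable def toFill (α : List ℕ) (f : ℕ → ℕ → ℕ) (p : ℕ × ℕ) : ℕ :=
  if h : ∃ j, IsCell α j p.2 ∧ f j p.2 = p.1 then Nat.find h else 0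

section toFill

variable {α : List ℕ} {f g : ℕ → ℕ → ℕ} {j r c : ℕ}

theorem toFill_spec (h : toFill α f (r, c) ≠ 0) :
    IsCell α (toFill α f (r, c)) c ∧ f (toFill α f (r, c)) c = r := by
  classical
  unfold toFill at h ⊢
  split_ifs at h ⊢ with hex
  · exact Nat.find_spec hex
  · exact absurd rfl h

theorem toFill_ne_zero_iff : toFill α f (r, c) ≠ 0 ↔ ∃ j, IsCell α j c ∧ f j c = r := by
  classical
  refine ⟨fun h => ⟨_, toFill_spec h⟩, fun hex => ?_⟩
  unfold toFill
  rw [dif_pos hex]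
  exact (Nat.lt_of_lt_of_le Nat.zero_lt_one (Nat.find_spec hex).1.1).ne'

theorem toFill_eq_iff (hf : IsColInjective α f) (hj : j ≠ 0) :
    toFill α f (r, c) = j ↔ IsCell α j c ∧ f j c = r := by
  constructor
  · rintro rfl
    exact toFill_spec hj
  · rintro ⟨hcell, rfl⟩
    have hne : toFill α f (f j c, c) ≠ 0 := toFill_ne_zero_iff.mpr ⟨j, hcell, rfl⟩
    obtain ⟨hcell', hrow⟩ := toFill_spec hne
    exact hf _ _ _ hcell' hcell hrow

theorem toFill_apply (hf : IsColInjective α f) (h : IsCell α j c) : toFill α f (f j c, c) = j :=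
  (toFill_eq_iff hf (by have := h.1; omega)).mpr ⟨h, rfl⟩

theorem toFill_congr (h : ∀ j c, IsCell α j c → f j c = g j c) : toFill α f = toFill α g := by
  funext ⟨r, c⟩
  have hcond : ∀ {j}, (IsCell α j c ∧ f j c = r) ↔ (IsCell α j c ∧ g j c = r) :=
    and_congr_right fun hj => by rw [h _ c hj]
  classical
  unfold toFill
  split_ifs with hf hg hg
  · exact Nat.find_congr' hcond
  · exact absurd (hf.imp fun _ => hcond.mp) hg
  · exact absurd (hg.imp fun _ => hcond.mpr) hf
  · rfl

theorem toFill_ne_toFill (hf : IsColInjective α f) (h : IsCell α j c) (hne : f j c ≠ g j c) :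
    toFill α f ≠ toFill α g := by
  intro heq
  have hfill := toFill_apply hf h
  rw [heq] at hfill
  have hne' : toFill α g (f j c, c) ≠ 0 := by rw [hfill]; have := h.1; omega
  have hrow := (toFill_spec hne').2
  rw [hfill] at hrow
  exact hne hrow.symm

theorem isKohnert_toFill (hf : IsRowFn α f) : IsKohnert α (toFill α f) := by
  have hinj := hf.isColInjective
  refine ⟨fun r c h => ?_, fun r c h => ?_, fun i hi hil c hc => ⟨fun hci => ?_, fun hci r h => ?_⟩,
    fun r c h => ?_, fun r c r' c' h heq hcc => ?_, fun r r' c h h' hlt hrr => ?_⟩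
  · generalize hj : toFill α f (r, c) = j at h
    obtain ⟨hcell, rfl⟩ := (toFill_eq_iff hinj h).mp hj
    exact ⟨hf.one_le _ _ hcell, hcell.2.2.1⟩
  · exact ⟨(toFill_spec h).1.1, (toFill_spec h).1.2.1⟩
  · have hcell : IsCell α i c := ⟨hi, hil, hc, hci⟩
    refine ⟨f i c, toFill_apply hinj hcell, fun r hr => ?_⟩
    exact ((toFill_eq_iff hinj (by omega)).mp hr).2.symm
  · have := ((toFill_eq_iff hinj (by omega)).mp h).1.2.2.2
    exact absurd this (not_le.mpr hci)
  · generalize hj : toFill α f (r, c) = j at h ⊢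
    obtain ⟨hcell, rfl⟩ := (toFill_eq_iff hinj h).mp hj
    exact hf.le_self _ _ hcell
  · generalize hj : toFill α f (r, c) = j at h heq
    obtain ⟨hcell, rfl⟩ := (toFill_eq_iff hinj h).mp hj
    obtain ⟨hcell', rfl⟩ := (toFill_eq_iff hinj h).mp heq.symm
    exact hf.antitone _ _ _ hcell hcell' hcc.le
  · generalize hj : toFill α f (r, c) = j at h hlt
    generalize hj' : toFill α f (r', c) = j' at h' hlt
    obtain ⟨hcell, rfl⟩ := (toFill_eq_iff hinj h).mp hj
    obtain ⟨hcell', rfl⟩ := (toFill_eq_iff hinj h').mp hj'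
    exact absurd (hf.strictMono _ _ _ hcell hcell' hlt) (not_lt.mpr hrr.le)

end toFill

section Kohnert

variable {α : List ℕ} {T : ℕ × ℕ → ℕ} {j r c : ℕ}

theorem IsKohnert.isCell (hT : IsKohnert α T) (h : T (r, c) ≠ 0) :
    IsCell α (T (r, c)) c ∧ 1 ≤ r ∧ r ≤ T (r, c) := by
  obtain ⟨hpos, hent, hcol, hrow, -, -⟩ := hT
  refine ⟨⟨(hent r c h).1, (hent r c h).2, (hpos r c h).2, not_lt.mp fun hc => ?_⟩,
    (hpos r c h).1, hrow r c h⟩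
  exact (hcol _ (hent r c h).1 (hent r c h).2 c (hpos r c h).2).2 hc r rfl

theorem IsKohnert.existsUnique_row (hT : IsKohnert α T) (h : IsCell α j c) :
    ∃! r, T (r, c) = j :=
  (hT.2.2.1 j h.1 h.2.1 c h.2.2.1).1 h.2.2.2

/-- The entry `j` lies in a row `r ≤ j`, and by induction the rows below `j` of column `c`
already hold the entries `r < j`. -/
theorem IsKohnert.apply_eq_self (hT : IsKohnert α T) (hj : 1 ≤ j) (hjl : j ≤ α.length)
    (hc : 1 ≤ c) (hlong : ∀ j', 1 ≤ j' → j' ≤ j → c ≤ part α j') : T (j, c) = j := by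
  induction j using Nat.strong_induction_on with
  | _ j ih =>
    obtain ⟨r, hr, -⟩ := hT.existsUnique_row ⟨hj, hjl, hc, hlong j hj le_rfl⟩
    obtain ⟨-, hr1, hrj⟩ := hT.isCell (r := r) (c := c) (by omega)
    rw [hr] at hrj
    rcases hrj.lt_or_eq with hlt | rfl
    · have := ih r hlt hr1 (by omega) fun j' h1 h2 => hlong j' h1 (by omega)
      omega
    · exact hr

open Classical in
noncomputable def rowOf (T : ℕ × ℕ → ℕ) (j c : ℕ) : ℕ :=
  if h : ∃ r, T (r, c) = j then Nat.find h else 0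

theorem IsKohnert.apply_rowOf (hT : IsKohnert α T) (h : IsCell α j c) : T (rowOf T j c, c) = j := by
  classical
  have hex : ∃ r, T (r, c) = j := (hT.existsUnique_row h).exists
  unfold rowOf
  rw [dif_pos hex]
  exact Nat.find_spec hex

theorem IsKohnert.rowOf_eq (hT : IsKohnert α T) (h : IsCell α j c) (hr : T (r, c) = j) :
    rowOf T j c = r :=
  (hT.existsUnique_row h).unique (hT.apply_rowOf h) hr

theorem IsKohnert.eq_toFill_rowOf (hT : IsKohnert α T) : T = toFill α (rowOf T) := by
  have hinj : IsColInjective α (rowOf T) := fun j j' c hj hj' heq => by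
    rw [← hT.apply_rowOf hj, ← hT.apply_rowOf hj', heq]
  funext ⟨r, c⟩
  by_cases h : T (r, c) = 0
  · rw [h, eq_comm]
    by_contra hne
    obtain ⟨hcell, hrow⟩ := toFill_spec hne
    have := hT.apply_rowOf hcell
    rw [hrow, h] at this
    exact hne this.symm
  · exact ((toFill_eq_iff hinj h).mpr ⟨(hT.isCell h).1, hT.rowOf_eq (hT.isCell h).1 rfl⟩).symm

theorem IsKohnert.eq_toFill (hT : IsKohnert α T) {f : ℕ → ℕ → ℕ}
    (h : ∀ j c, IsCell α j c → rowOf T j c = f j c) : T = toFill α f :=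
  hT.eq_toFill_rowOf.trans (toFill_congr h)

end Kohnert

section Fillings

variable {α : List ℕ}

def rowBasic : ℕ → ℕ → ℕ := fun j _ => j

theorem isRowFn_rowBasic (α : List ℕ) : IsRowFn α rowBasic :=
  ⟨fun _ _ h => h.1, fun _ _ _ => le_rfl, fun _ _ _ _ _ _ => le_rfl, fun _ _ _ _ _ h => h⟩

theorem basicFilling_eq_toFill (α : List ℕ) : basicFilling α = toFill α rowBasic := by
  funext ⟨r, c⟩
  by_cases h : IsCell α r c
  · exact (if_pos h).trans (toFill_apply (isRowFn_rowBasic α).isColInjective h).symm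
  · refine (if_neg h).trans (Eq.symm ?_)
    by_contra hne
    obtain ⟨hcell, hrow⟩ := toFill_spec hne
    exact h (hrow ▸ hcell)

theorem isKohnert_basicFilling (α : List ℕ) : IsKohnert α (basicFilling α) :=
  basicFilling_eq_toFill α ▸ isKohnert_toFill (isRowFn_rowBasic α)

def moveCell (f : ℕ → ℕ → ℕ) (j c r : ℕ) : ℕ → ℕ → ℕ :=
  fun j' c' => if j' = j ∧ c' = c then r else f j' c'

theorem IsRowFn.moveCell {f : ℕ → ℕ → ℕ} (hf : IsRowFn α f) {j c r : ℕ} (hcell : IsCell α j c)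
    (hr : 1 ≤ r) (hrf : r ≤ f j c) (hright : ∀ c', IsCell α j c' → c < c' → f j c' ≤ r)
    (hbelow : ∀ j', j' < j → IsCell α j' c → f j' c < r)
    (habove : ∀ j', j < j' → IsCell α j' c → r < f j' c) : IsRowFn α (moveCell f j c r) := by
  refine ⟨fun j' c' h => ?_, fun j' c' h => ?_, fun j' c₁ c₂ h₁ h₂ hc => ?_,
    fun j₁ j₂ c' h₁ h₂ hj => ?_⟩ <;> simp only [_root_.moveCell]
  · split_ifs
    exacts [hr, hf.one_le _ _ h]
  · split_ifs with hjc
    exacts [hjc.1 ▸ hrf.trans (hf.le_self _ _ hcell), hf.le_self _ _ h]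
  · split_ifs with hc₂ hc₁ hc₁
    · exact le_rfl
    · obtain ⟨rfl, rfl⟩ := hc₂
      exact hrf.trans (hf.antitone _ _ _ h₁ hcell hc)
    · obtain ⟨rfl, rfl⟩ := hc₁
      exact hright c₂ h₂ (lt_of_le_of_ne hc fun h => hc₂ ⟨rfl, h.symm⟩)
    · exact hf.antitone _ _ _ h₁ h₂ hc
  · split_ifs with hj₁ hj₂ hj₂
    · omega
    · obtain ⟨rfl, rfl⟩ := hj₁
      exact habove j₂ hj h₂
    · obtain ⟨rfl, rfl⟩ := hj₂
      exact hbelow j₁ hj h₁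
    · exact hf.strictMono _ _ _ h₁ h₂ hj

def lowerLast (α : List ℕ) (y x : ℕ) : ℕ → ℕ → ℕ := moveCell rowBasic y (part α y) x

theorem isRowFn_lowerLast {x y : ℕ} (hx : 1 ≤ x) (hxy : x < y) (hy : y ≤ α.length)
    (hshort : ∀ j, x ≤ j → j < y → part α j < part α y) : IsRowFn α (lowerLast α y x) := by
  have hpart := hshort x le_rfl hxy
  refine (isRowFn_rowBasic α).moveCell ⟨by omega, hy, by omega, le_rfl⟩ hx hxy.le
    (fun c' h hc' => absurd h.2.2.2 (by omega)) (fun j' hj' h => ?_) (fun j' hj' _ => by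
      simp only [rowBasic]; omega)
  by_contra hle
  exact absurd h.2.2.2 (not_le.mpr (hshort j' (by simpa [rowBasic] using hle) hj'))

theorem lowerLast_apply_ne {x y : ℕ} (hxy : x ≠ y) : lowerLast α y x y (part α y) ≠ y := by
  simpa [lowerLast, moveCell] using hxy

end Fillings

section Weights

variable {α : List ℕ} {T : ℕ × ℕ → ℕ}

theorem wtList_eq_of_rows {w : List ℕ} (hlen : w.length = α.length) (hle : ∀ x ∈ w, x ≤ α.sum)
    (hrow : ∀ t < α.length, ∀ c, 1 ≤ c → (T (t + 1, c) ≠ 0 ↔ c ≤ w.getD t 0)) :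
    wtList α T = w := by
  refine List.ext_getElem (by simp [wtList, hlen]) fun t ht htw => ?_
  have htl : t < α.length := hlen ▸ htw
  have hrow' := hrow t htl
  rw [List.getD_eq_getElem _ _ htw] at hrow'
  have hw := hle _ (List.getElem_mem htw)
  have hfilter : (Finset.Icc 1 α.sum).filter (fun c => T (t + 1, c) ≠ 0) = Finset.Icc 1 w[t] := by
    ext c
    simp only [Finset.mem_filter, Finset.mem_Icc]
    constructor
    · rintro ⟨⟨hc, -⟩, hne⟩
      exact ⟨hc, (hrow' c hc).mp hne⟩
    · rintro ⟨hc, hcw⟩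
      exact ⟨⟨hc, hcw.trans hw⟩, (hrow' c hc).mpr hcw⟩
  simp [wtList, hfilter]

theorem wtList_basicFilling (α : List ℕ) : wtList α (basicFilling α) = α := by
  refine wtList_eq_of_rows rfl (fun x hx => List.le_sum_of_mem hx) fun t ht c hc => ?_
  simp [basicFilling, ht, hc, Nat.succ_le_of_lt ht]

/-- For a strong composition the first column is the basic one, so no row is empty. -/
theorem IsKohnert.wtList_pos (hpos : ∀ x ∈ α, 0 < x) (hT : IsKohnert α T) :
    ∀ y ∈ wtList α T, 0 < y := by
  simp only [wtList, List.mem_map, List.mem_range]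
  rintro _ ⟨t, ht, rfl⟩
  have hcol : T (t + 1, 1) = t + 1 :=
    hT.apply_eq_self (by omega) ht le_rfl fun j' h1 h2 => part_pos hpos h1 (by omega)
  refine Finset.card_pos.mpr ⟨1, Finset.mem_filter.mpr ⟨Finset.mem_Icc.mpr ⟨le_rfl, ?_⟩, ?_⟩⟩
  · exact (part_pos hpos (by omega : 1 ≤ t + 1) ht).trans_le (part_le_sum α _)
  · omega

theorem setOf_isKohnert_finite (α : List ℕ) : {T | IsKohnert α T}.Finite := by
  let extend (g : Fin (α.length + 1) × Fin (α.sum + 1) → Fin (α.length + 1)) (p : ℕ × ℕ) : ℕ :=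
    if h : p.1 < α.length + 1 ∧ p.2 < α.sum + 1 then g (⟨p.1, h.1⟩, ⟨p.2, h.2⟩) else 0
  refine (Set.finite_range extend).subset fun T hT => ?_
  have hbox : ∀ r c, T (r, c) ≠ 0 → r < α.length + 1 ∧ c < α.sum + 1 ∧ T (r, c) < α.length + 1 :=
    fun r c h => by
      obtain ⟨⟨-, hj, -, hc⟩, -, hr⟩ := hT.isCell h
      have := part_le_sum α (T (r, c))
      omega
  refine ⟨fun p => ⟨T (p.1, p.2), ?_⟩, funext fun ⟨r, c⟩ => ?_⟩
  · by_cases h : T (p.1, p.2) = 0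
    · omega
    · exact (hbox _ _ h).2.2
  · by_cases h : r < α.length + 1 ∧ c < α.sum + 1
    · simp only [extend, dif_pos h]
    · simp only [extend, dif_neg h]
      by_contra hne
      exact h ⟨(hbox r c (Ne.symm hne)).1, (hbox r c (Ne.symm hne)).2.1⟩

theorem keyCoeff_pos_iff {b : List ℕ} :
    0 < keyCoeff α b ↔ ∃ T, IsKohnert α T ∧ wtList α T = b :=
  Set.ncard_pos ((setOf_isKohnert_finite α).subset fun _ h => h.1)

end Weights

section Ascent

variable {α : List ℕ} {i : ℕ}

theorem one_le_of_ascent (h : part α i < part α (i + 1)) : 1 ≤ i := by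
  rcases Nat.eq_zero_or_pos i with rfl | hi
  · exact absurd h (lt_irrefl _)
  · exact hi

theorem lt_length_of_ascent (h : part α i < part α (i + 1)) : i < α.length := by
  by_contra hi
  rw [part_eq_zero (j := i + 1) (by omega)] at h
  omega

theorem isCell_of_ascent (h : part α i < part α (i + 1)) :
    IsCell α (i + 1) (part α (i + 1)) :=
  ⟨by omega, lt_length_of_ascent h, by omega, le_rfl⟩

theorem isRowFn_lowerLast_of_ascent (h : part α i < part α (i + 1)) :
    IsRowFn α (lowerLast α (i + 1) i) :=
  isRowFn_lowerLast (one_le_of_ascent h) (by omega) (lt_length_of_ascent h) fun j h1 h2 =>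
    (show j = i by omega) ▸ h

end Ascent

section Swap

def swapAdj (l : List ℕ) (n : ℕ) : List ℕ := (l.set n (l.getD (n + 1) 0)).set (n + 1) (l.getD n 0)

theorem getD_swapAdj {l : List ℕ} {n : ℕ} (h : n + 1 < l.length) (t : ℕ) :
    (swapAdj l n).getD t 0 =
      if t = n then l.getD (n + 1) 0 else if t = n + 1 then l.getD n 0 else l.getD t 0 := by
  simp only [swapAdj, List.getD_eq_getElem?_getD, List.getElem?_set, List.length_set]
  split_ifs <;> first | omega | rfl

theorem perm_swapAdj {l : List ℕ} {n : ℕ} (h : n + 1 < l.length) : (swapAdj l n).Perm l := by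
  induction l generalizing n with
  | nil => simp at h
  | cons x t ih =>
    rcases n with _ | n
    · obtain ⟨y, t, rfl⟩ := List.exists_cons_of_length_pos (by simp at h; omega : 0 < t.length)
      exact List.Perm.swap x y t
    · simpa [swapAdj] using (ih (n := n) (by simp at h; omega)).cons x

end Swap

structure IsSoleInversionAt (α : List ℕ) (i : ℕ) : Prop where
  part_succ : part α (i + 1) = part α i + 1
  antitone : ∀ j j', 1 ≤ j → j < j' → (j, j') ≠ (i, i + 1) → part α j' ≤ part α j

namespace IsSoleInversionAt

variable {α : List ℕ} {i : ℕ}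

theorem ascent (hs : IsSoleInversionAt α i) : part α i < part α (i + 1) := by
  rw [hs.part_succ]
  exact Nat.lt_succ_self _

theorem one_le (hs : IsSoleInversionAt α i) : 1 ≤ i := one_le_of_ascent hs.ascent

theorem lt_length (hs : IsSoleInversionAt α i) : i < α.length := lt_length_of_ascent hs.ascent

theorem exists_eq_succ (hs : IsSoleInversionAt α i) : ∃ n, i = n + 1 :=
  ⟨i - 1, by have := hs.one_le; omega⟩

theorem perm_swapAdj (hs : IsSoleInversionAt α i) :
    (swapAdj α (i - 1)).Perm α :=
  _root_.perm_swapAdj (by have := hs.one_le; have := hs.lt_length; omega)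

theorem swapAdj_ne (hs : IsSoleInversionAt α i) : swapAdj α (i - 1) ≠ α := by
  obtain ⟨n, rfl⟩ := hs.exists_eq_succ
  rw [Nat.add_sub_cancel]
  intro h
  have hget := getD_swapAdj (hs.lt_length : n + 1 < α.length) n
  rw [if_pos rfl, h, getD_eq_part, getD_eq_part, hs.part_succ] at hget
  simp at hget

theorem pairwise_swapAdj (hs : IsSoleInversionAt α i) : (swapAdj α (i - 1)).Pairwise (· ≥ ·) := by
  obtain ⟨n, rfl⟩ := hs.exists_eq_succ
  have hlen : n + 1 < α.length := hs.lt_length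
  have hgap := hs.part_succ
  have hanti : ∀ s t, s < t → ¬(s = n ∧ t = n + 1) → part α (t + 1) ≤ part α (s + 1) :=
    fun s t hst hne => hs.antitone _ _ (by omega) (by omega) (by simp; omega)
  rw [Nat.add_sub_cancel, List.pairwise_iff_getElem]
  intro a b ha hb hab
  rw [← List.getD_eq_getElem _ 0, ← List.getD_eq_getElem _ 0, getD_swapAdj hlen,
    getD_swapAdj hlen]
  simp only [getD_eq_part]
  split_ifs <;>
    first
    | omega
    | (have := hanti a b (by omega) (by omega); omega)
    | (have := hanti n b (by omega) (by omega); omega)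
    | (have := hanti a (n + 1) (by omega) (by omega); omega)

theorem wtList_lowerLast (hs : IsSoleInversionAt α i) :
    wtList α (toFill α (lowerLast α (i + 1) i)) = swapAdj α (i - 1) := by
  obtain ⟨n, rfl⟩ := hs.exists_eq_succ
  have hlen : n + 1 < α.length := hs.lt_length
  have hgap := hs.part_succ
  rw [Nat.add_sub_cancel]
  refine wtList_eq_of_rows (by simp [swapAdj])
    (fun x hx => List.le_sum_of_mem ((_root_.perm_swapAdj hlen).subset hx)) fun t ht c hc => ?_
  rw [toFill_ne_zero_iff, getD_swapAdj hlen, getD_eq_part, getD_eq_part, getD_eq_part]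
  simp only [lowerLast, moveCell, rowBasic]
  constructor
  · rintro ⟨j, ⟨hj1, -, -, hcj⟩, hrow⟩
    split_ifs at hrow with hmoved
    · obtain ⟨rfl, rfl⟩ := hmoved
      split_ifs <;> omega
    · subst hrow
      split_ifs with htn htn' <;> (try subst htn) <;> (try subst htn') <;> omega
  · intro hle
    split_ifs at hle with htn htn'
    · by_cases hc' : c = part α (n + 1 + 1)
      · exact ⟨n + 1 + 1, ⟨by omega, hlen, hc, hc'.le⟩, by simp [hc', htn]⟩
      · exact ⟨n + 1, ⟨by omega, hlen.le, hc, by omega⟩, by simp [htn]⟩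
    · exact ⟨n + 1 + 1, ⟨by omega, hlen, hc, by omega⟩, by simp [htn']; omega⟩
    · exact ⟨t + 1, ⟨by omega, ht, hc, hle⟩, by simp; omega⟩

end IsSoleInversionAt

theorem IsKohnert.rowOf_eq_self_of_isSoleInversionAt {α : List ℕ} {T : ℕ × ℕ → ℕ} {i j c : ℕ}
    (hT : IsKohnert α T) (hs : IsSoleInversionAt α i) (hcell : IsCell α j c)
    (hne : ¬(j = i + 1 ∧ c = part α (i + 1))) : rowOf T j c = j := by
  refine hT.rowOf_eq hcell (hT.apply_eq_self hcell.1 hcell.2.1 hcell.2.2.1 fun j' h1 h2 => ?_)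
  rcases h2.lt_or_eq with hlt | rfl
  · by_cases hji : (j', j) = (i, i + 1)
    · obtain ⟨rfl, rfl⟩ := Prod.mk.inj hji
      have hne' : c ≠ part α (j' + 1) := fun h => hne ⟨rfl, h⟩
      have hle := hcell.2.2.2
      rw [hs.part_succ] at hne' hle
      omega
    · exact hcell.2.2.2.trans (hs.antitone j' j h1 hlt hji)
  · exact hcell.2.2.2

/-- The rows below `i` of the last column of `i + 1` hold their own entries. -/
theorem IsKohnert.rowOf_last_eq_or_eq {α : List ℕ} {T : ℕ × ℕ → ℕ} {i : ℕ} (hT : IsKohnert α T)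
    (hs : IsSoleInversionAt α i) :
    rowOf T (i + 1) (part α (i + 1)) = i ∨ rowOf T (i + 1) (part α (i + 1)) = i + 1 := by
  have hcell := isCell_of_ascent hs.ascent
  have hr := hT.apply_rowOf hcell
  obtain ⟨-, hr1, hri⟩ := hT.isCell (r := rowOf T (i + 1) (part α (i + 1))) (by rw [hr]; omega)
  rw [hr] at hri
  have hri' : i ≤ rowOf T (i + 1) (part α (i + 1)) := by
    by_contra hlt
    have := hT.apply_eq_self hr1 (by have := hs.lt_length; omega) hcell.2.2.1 fun j' h1 h2 =>
      hs.antitone j' (i + 1) h1 (by omega) (by simp; omega)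
    omega
  omega

theorem IsKohnert.eq_basicFilling_or_eq_lowerLast {α : List ℕ} {T : ℕ × ℕ → ℕ} {i : ℕ}
    (hT : IsKohnert α T) (hs : IsSoleInversionAt α i) :
    T = basicFilling α ∨ T = toFill α (lowerLast α (i + 1) i) := by
  have hforced := fun j c => hT.rowOf_eq_self_of_isSoleInversionAt (j := j) (c := c) hs
  rcases hT.rowOf_last_eq_or_eq hs with hrow | hrow
  · refine Or.inr (hT.eq_toFill fun j c hc => ?_)
    by_cases hjc : j = i + 1 ∧ c = part α (i + 1)
    · obtain ⟨rfl, rfl⟩ := hjc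
      simpa [lowerLast, moveCell] using hrow
    · rw [hforced j c hc hjc, lowerLast, moveCell, if_neg hjc, rowBasic]
  · refine Or.inl ((basicFilling_eq_toFill α).symm ▸ hT.eq_toFill fun j c hc => ?_)
    by_cases hjc : j = i + 1 ∧ c = part α (i + 1)
    · obtain ⟨rfl, rfl⟩ := hjc
      exact hrow
    · exact hforced j c hc hjc

theorem ncard_fiber_of_forall_eq_or_eq {X Y : Type*} [DecidableEq Y] {P : X → Prop} {w : X → Y}
    {x₁ x₂ : X} (hP : ∀ x, P x ↔ x = x₁ ∨ x = x₂) (hw : w x₁ ≠ w x₂) (y : Y) :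
    {x | P x ∧ w x = y}.ncard = (if y = w x₁ then 1 else 0) + (if y = w x₂ then 1 else 0) := by
  by_cases h₁ : y = w x₁
  · subst h₁
    rw [if_pos rfl, if_neg hw, add_zero, ← Set.ncard_singleton x₁]
    congr 1
    ext x
    simp only [Set.mem_ofPred_eq, Set.mem_singleton_iff, hP]
    constructor
    · rintro ⟨rfl | rfl, h⟩
      exacts [rfl, absurd h.symm hw]
    · rintro rfl
      exact ⟨Or.inl rfl, rfl⟩
  by_cases h₂ : y = w x₂
  · subst h₂
    rw [if_neg h₁, if_pos rfl, zero_add, ← Set.ncard_singleton x₂]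
    congr 1
    ext x
    simp only [Set.mem_ofPred_eq, Set.mem_singleton_iff, hP]
    constructor
    · rintro ⟨rfl | rfl, h⟩
      exacts [absurd h hw, rfl]
    · rintro rfl
      exact ⟨Or.inr rfl, rfl⟩
  rw [if_neg h₁, if_neg h₂, add_zero, ← Set.ncard_empty X]
  congr 1
  ext x
  simp only [Set.mem_ofPred_eq, Set.mem_empty_iff_false, iff_false, hP]
  rintro ⟨rfl | rfl, rfl⟩
  exacts [h₁ rfl, h₂ rfl]

theorem IsSoleInversionAt.keyCoeff_eq {α : List ℕ} {i : ℕ} (hs : IsSoleInversionAt α i)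
    (b : List ℕ) :
    keyCoeff α b = (if b = α then 1 else 0) + (if b = swapAdj α (i - 1) then 1 else 0) := by
  have hK : ∀ T, IsKohnert α T ↔ T = basicFilling α ∨ T = toFill α (lowerLast α (i + 1) i) :=
    fun T => ⟨fun hT => hT.eq_basicFilling_or_eq_lowerLast hs, by
      rintro (rfl | rfl)
      exacts [isKohnert_basicFilling α, isKohnert_toFill (isRowFn_lowerLast_of_ascent hs.ascent)]⟩
  have hw : wtList α (basicFilling α) ≠ wtList α (toFill α (lowerLast α (i + 1) i)) := by
    rw [wtList_basicFilling, hs.wtList_lowerLast]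
    exact hs.swapAdj_ne.symm
  have := ncard_fiber_of_forall_eq_or_eq hK hw b
  rwa [wtList_basicFilling, hs.wtList_lowerLast] at this

theorem get_eq_part (α : List ℕ) (t : Fin α.length) : α.get t = part α (t + 1) := by
  simp [part]

theorem IsSoleInversionAt.invSet_eq {α : List ℕ} {i : ℕ} (hs : IsSoleInversionAt α i) :
    invSet α = {(⟨i - 1, by have := hs.lt_length; omega⟩, ⟨i, hs.lt_length⟩)} := by
  have hi := hs.one_le
  ext ⟨p, q⟩
  simp only [invSet, Finset.mem_filter, Finset.mem_univ, true_and, Finset.mem_singleton,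
    Prod.mk.injEq, Fin.lt_def, Fin.ext_iff, get_eq_part]
  constructor
  · rintro ⟨hpq, hlt⟩
    by_contra hne
    exact absurd (hs.antitone _ _ (by omega) (by omega) (by simp; omega)) (not_le.mpr hlt)
  · rintro ⟨hp, hq⟩
    rw [hp, hq, Nat.sub_add_cancel hi]
    exact ⟨by omega, hs.ascent⟩

theorem exists_isSoleInversionAt_of_invSet {α : List ℕ} (hcard : (invSet α).card = 1)
    (hadj : ∀ p ∈ invSet α, (p.2 : ℕ) = (p.1 : ℕ) + 1 ∧ α.get p.2 = α.get p.1 + 1) :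
    ∃ i, IsSoleInversionAt α i := by
  obtain ⟨⟨p, q⟩, hpq⟩ := Finset.card_eq_one.mp hcard
  obtain ⟨hq, hval⟩ := hadj (p, q) (by simp [hpq])
  simp only [get_eq_part] at hq hval
  refine ⟨p + 1, by rw [← hval, ← hq], fun j j' hj hjj' hne => not_lt.mp fun hlt => ?_⟩
  have hj' : j' ≤ α.length := by
    by_contra h
    rw [part_eq_zero (j := j') (by omega)] at hlt
    omega
  have hmem : ((⟨j - 1, by omega⟩, ⟨j' - 1, by omega⟩) : Fin α.length × Fin α.length) ∈
      invSet α := by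
    simp only [invSet, Finset.mem_filter, Finset.mem_univ, true_and, Fin.lt_def, get_eq_part,
      Nat.sub_add_cancel hj, Nat.sub_add_cancel (hj.trans hjj'.le)]
    exact ⟨by omega, hlt⟩
  simp only [hpq, Finset.mem_singleton, Prod.mk.injEq, Fin.ext_iff] at hmem
  exact hne (by simp; omega)

theorem exists_isSoleInversionAt_iff {α : List ℕ} :
    (∃ i, IsSoleInversionAt α i) ↔ (invSet α).card = 1 ∧
      ∀ p ∈ invSet α, (p.2 : ℕ) = (p.1 : ℕ) + 1 ∧ α.get p.2 = α.get p.1 + 1 := by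
  refine ⟨fun ⟨i, hs⟩ => ?_, fun h => exists_isSoleInversionAt_of_invSet h.1 h.2⟩
  have hi := hs.one_le
  rw [hs.invSet_eq]
  refine ⟨Finset.card_singleton _, fun p hp => ?_⟩
  rw [Finset.mem_singleton.mp hp, get_eq_part, get_eq_part]
  exact ⟨(Nat.sub_add_cancel hi).symm, by simpa [Nat.sub_add_cancel hi] using hs.part_succ⟩

theorem antitoneOn_Icc_of_succ_le {f : ℕ → ℕ} {a b : ℕ}
    (h : ∀ n, a ≤ n → n < b → f (n + 1) ≤ f n) : AntitoneOn f (Set.Icc a b) := by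
  rintro x ⟨hax, -⟩ y ⟨-, hyb⟩ hxy
  induction y, hxy using Nat.le_induction with
  | base => exact le_rfl
  | succ y hxy ih => exact (h y (by omega) (by omega)).trans (ih (by omega))

theorem IsKohnert.eq_basicFilling_of_antitone {α : List ℕ} {T : ℕ × ℕ → ℕ} (hT : IsKohnert α T)
    (hanti : ∀ p, part α (p + 1) ≤ part α p) : T = basicFilling α := by
  rw [basicFilling_eq_toFill]
  refine hT.eq_toFill fun j c hc => hT.rowOf_eq hc (hT.apply_eq_self hc.1 hc.2.1 hc.2.2.1
    fun j' _ h => hc.2.2.2.trans (antitone_nat_of_succ_le hanti h))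

section SubsetPair

/-! When its conclusion fails, each lemma below exhibits two distinct non-basic Kohnert
tableaux, contradicting `hT₁`. -/

variable {α : List ℕ} {T₁ : ℕ × ℕ → ℕ} {i : ℕ}

theorem rowFn_eq_of_subset_pair (hT₁ : {T | IsKohnert α T} ⊆ {basicFilling α, T₁})
    {f g : ℕ → ℕ → ℕ} (hf : IsRowFn α f) (hg : IsRowFn α g) {j₁ c₁ j₂ c₂ j c : ℕ}
    (hf₁ : IsCell α j₁ c₁) (hf₁' : f j₁ c₁ ≠ j₁) (hg₂ : IsCell α j₂ c₂) (hg₂' : g j₂ c₂ ≠ j₂)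
    (hc : IsCell α j c) : f j c = g j c := by
  have hT₁_eq : ∀ {f : ℕ → ℕ → ℕ} {j c : ℕ}, IsRowFn α f → IsCell α j c → f j c ≠ j →
      toFill α f = T₁ := fun hf hc hne =>
    (hT₁ (isKohnert_toFill hf)).resolve_left
      (basicFilling_eq_toFill α ▸ toFill_ne_toFill hf.isColInjective hc hne)
  by_contra hne
  exact toFill_ne_toFill hf.isColInjective hc hne
    ((hT₁_eq hf hf₁ hf₁').trans (hT₁_eq hg hg₂ hg₂').symm)

theorem ascent_unique_of_subset_pair (hT₁ : {T | IsKohnert α T} ⊆ {basicFilling α, T₁})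
    (hi : part α i < part α (i + 1)) {p : ℕ} (hp : part α p < part α (p + 1)) : p = i := by
  by_contra hpi
  have := rowFn_eq_of_subset_pair hT₁ (isRowFn_lowerLast_of_ascent hi)
    (isRowFn_lowerLast_of_ascent hp) (isCell_of_ascent hi) (lowerLast_apply_ne (by omega))
    (isCell_of_ascent hp) (lowerLast_apply_ne (by omega)) (isCell_of_ascent hi)
  simp only [lowerLast, moveCell, rowBasic, and_true, if_pos] at this
  split_ifs at this <;> omega

theorem part_succ_eq_of_subset_pair (hT₁ : {T | IsKohnert α T} ⊆ {basicFilling α, T₁})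
    (hi : part α i < part α (i + 1)) : part α (i + 1) = part α i + 1 := by
  by_contra hgap
  have hcell : IsCell α (i + 1) (part α (i + 1) - 1) :=
    ⟨by omega, lt_length_of_ascent hi, by omega, by omega⟩
  have hg : IsRowFn α (moveCell (lowerLast α (i + 1) i) (i + 1) (part α (i + 1) - 1) i) := by
    refine (isRowFn_lowerLast_of_ascent hi).moveCell hcell (one_le_of_ascent hi)
      ?_ (fun c' h hc' => ?_) (fun j' hj' h => ?_) (fun j' hj' _ => ?_) <;>
      simp only [lowerLast, moveCell, rowBasic, true_and]
    · split_ifs <;> omega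
    · have := h.2.2.2
      split_ifs <;> omega
    · have : j' ≠ i := by
        rintro rfl
        have := h.2.2.2
        omega
      split_ifs <;> omega
    · split_ifs <;> omega
  have := rowFn_eq_of_subset_pair hT₁ (isRowFn_lowerLast_of_ascent hi) hg
    (isCell_of_ascent hi) (lowerLast_apply_ne (by omega)) hcell
    (by simp [moveCell]) hcell
  simp [lowerLast, moveCell, rowBasic] at this
  omega

theorem part_lt_of_subset_pair (hT₁ : {T | IsKohnert α T} ⊆ {basicFilling α, T₁})
    (hi : part α i < part α (i + 1)) (hpre : AntitoneOn (part α) (Set.Icc 1 i)) {j : ℕ}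
    (hj : 1 ≤ j) (hji : j < i) : part α i < part α j := by
  by_contra hle
  have hg : IsRowFn α (lowerLast α (i + 1) j) :=
    isRowFn_lowerLast hj (by omega) (lt_length_of_ascent hi) fun j' h1 h2 =>
      ((hpre ⟨hj, hji.le⟩ ⟨by omega, by omega⟩ h1).trans (not_lt.mp hle)).trans_lt hi
  have := rowFn_eq_of_subset_pair hT₁ (isRowFn_lowerLast_of_ascent hi) hg
    (isCell_of_ascent hi) (lowerLast_apply_ne (by omega)) (isCell_of_ascent hi)
    (lowerLast_apply_ne (by omega)) (isCell_of_ascent hi)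
  simp [lowerLast, moveCell] at this
  omega

theorem part_add_two_le_of_subset_pair (hT₁ : {T | IsKohnert α T} ⊆ {basicFilling α, T₁})
    (hi : part α i < part α (i + 1)) (hgap : part α (i + 1) = part α i + 1)
    (hdesc : part α (i + 2) ≤ part α (i + 1)) : part α (i + 2) ≤ part α i := by
  by_contra hlt
  have hcell : IsCell α (i + 2) (part α (i + 2)) := by
    refine ⟨by omega, not_lt.mp fun h => ?_, by omega, le_rfl⟩
    rw [part_eq_zero h] at hlt
    omega
  have hg : IsRowFn α (moveCell (lowerLast α (i + 1) i) (i + 2) (part α (i + 2)) (i + 1)) := by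
    refine (isRowFn_lowerLast_of_ascent hi).moveCell hcell (by omega) ?_
      (fun c' h hc' => absurd h.2.2.2 (by omega)) (fun j' hj' h => ?_) (fun j' hj' _ => ?_) <;>
      simp only [lowerLast, moveCell, rowBasic]
    · split_ifs <;> omega
    · have : j' ≠ i := by
        rintro rfl
        have := h.2.2.2
        omega
      split_ifs <;> omega
    · split_ifs <;> omega
  have := rowFn_eq_of_subset_pair hT₁ (isRowFn_lowerLast_of_ascent hi) hg
    (isCell_of_ascent hi) (lowerLast_apply_ne (by omega)) hcell (by simp [moveCell]) hcell
  simp [lowerLast, moveCell, rowBasic] at this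

theorem exists_isSoleInversionAt_of_subset_pair
    (hT₁ : {T | IsKohnert α T} ⊆ {basicFilling α, T₁}) (hK : IsKohnert α T₁)
    (hne : T₁ ≠ basicFilling α) : ∃ i, IsSoleInversionAt α i := by
  obtain ⟨i, hi⟩ : ∃ i, part α i < part α (i + 1) := by
    by_contra hno
    simp only [not_exists, not_lt] at hno
    exact hne (hK.eq_basicFilling_of_antitone hno)
  have hdesc : ∀ p, p ≠ i → part α (p + 1) ≤ part α p := fun p hp =>
    not_lt.mp fun h => hp (ascent_unique_of_subset_pair hT₁ hi h)
  have hpre : AntitoneOn (part α) (Set.Icc 1 i) :=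
    antitoneOn_Icc_of_succ_le fun n _ hn => hdesc n (by omega)
  have hsuf : ∀ j', AntitoneOn (part α) (Set.Icc (i + 1) j') := fun j' =>
    antitoneOn_Icc_of_succ_le fun n hn _ => hdesc n (by omega)
  have hgap := part_succ_eq_of_subset_pair hT₁ hi
  have hnext := part_add_two_le_of_subset_pair hT₁ hi hgap (hdesc (i + 1) (by omega))
  refine ⟨i, hgap, fun j j' hj hjj' hne => ?_⟩
  by_cases hj'i : j' ≤ i
  · exact hpre ⟨hj, by omega⟩ ⟨by omega, hj'i⟩ hjj'.le
  by_cases hji : i + 1 ≤ j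
  · exact hsuf j' ⟨hji, hjj'.le⟩ ⟨by omega, le_rfl⟩ hjj'.le
  have hij : part α i ≤ part α j := hpre ⟨hj, by omega⟩ ⟨by omega, le_rfl⟩ (by omega)
  by_cases hj' : j' = i + 1
  · subst hj'
    have := part_lt_of_subset_pair hT₁ hi hpre hj (by simp at hne; omega)
    omega
  · have := hsuf j' ⟨by omega, by omega⟩ ⟨by omega, le_rfl⟩ (by omega : i + 2 ≤ j')
    omega

end SubsetPair

theorem exists_subset_pair_of_keyCoeff {α β : List ℕ} (hpos : ∀ x ∈ α, 0 < x) (hβ : β ≠ α)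
    (hid : ∀ b, keyCoeff α b = fundCoeff α b + fundCoeff β b) :
    ∃ T₁, IsKohnert α T₁ ∧ wtList α T₁ = β ∧ {T | IsKohnert α T} ⊆ {basicFilling α, T₁} := by
  have hββ : keyCoeff α β = 1 := by rw [hid, fundCoeff_of_pos hpos, if_neg hβ, fundCoeff_self]
  obtain ⟨T₁, hK₁, hw₁⟩ := keyCoeff_pos_iff.mp (by omega : 0 < keyCoeff α β)
  have hkey : ∀ b, keyCoeff α b = (if b = α then 1 else 0) + (if b = β then 1 else 0) := by
    intro b
    rw [hid, fundCoeff_of_pos hpos, fundCoeff_of_pos (hw₁ ▸ hK₁.wtList_pos hpos)]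
  have hsingle : ∀ {b T T'}, keyCoeff α b = 1 → IsKohnert α T → wtList α T = b →
      IsKohnert α T' → wtList α T' = b → T = T' := by
    intro b T T' h hT hw hT' hw'
    obtain ⟨T₀, hT₀⟩ := Set.ncard_eq_one.mp h
    have h₁ : T ∈ ({T₀} : Set _) := hT₀ ▸ ⟨hT, hw⟩
    have h₂ : T' ∈ ({T₀} : Set _) := hT₀ ▸ ⟨hT', hw'⟩
    exact h₁.trans h₂.symm
  refine ⟨T₁, hK₁, hw₁, fun T hT => ?_⟩
  by_cases hα : wtList α T = α
  · exact Or.inl (hsingle (by simp [hkey, hβ.symm]) hT hα (isKohnert_basicFilling α)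
      (wtList_basicFilling α))
  · have hT_pos := keyCoeff_pos_iff.mpr ⟨T, hT, rfl⟩
    rw [hkey, if_neg hα] at hT_pos
    have hwβ : wtList α T = β := by
      by_contra h
      simp [h] at hT_pos
    exact Or.inr (hsingle hββ hT hwβ hK₁ hw₁)

theorem isSoleInversionAt_of_keyCoeff {α β : List ℕ} (hpos : ∀ x ∈ α, 0 < x) (hβ : β ≠ α)
    (hid : ∀ b, keyCoeff α b = fundCoeff α b + fundCoeff β b) :
    ∃ i, IsSoleInversionAt α i ∧ β = swapAdj α (i - 1) := by
  obtain ⟨T₁, hK₁, rfl, hT₁⟩ := exists_subset_pair_of_keyCoeff hpos hβ hid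
  have hne : T₁ ≠ basicFilling α := fun h => hβ (h ▸ wtList_basicFilling α)
  obtain ⟨i, hs⟩ := exists_isSoleInversionAt_of_subset_pair hT₁ hK₁ hne
  refine ⟨i, hs, ?_⟩
  rw [← hs.wtList_lowerLast, (hK₁.eq_basicFilling_or_eq_lowerLast hs).resolve_left hne]

/-- for a strong composition `α`, `κ_α = 𝔉_α + 𝔉_β` with `β ≠ α` iff
`α` has exactly one inversion, an adjacent pair `(i, i+1)` with `αᵢ₊₁ = αᵢ + 1`;
in that case `β = sort(α)`, the weakly decreasing rearrangement of `α`. -/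
theorem stmt14 (α : List ℕ) (hpos : ∀ x ∈ α, 0 < x) :
    ((∃ β : List ℕ, β ≠ α ∧
        ∀ b : List ℕ, keyCoeff α b = fundCoeff α b + fundCoeff β b) ↔
      ((invSet α).card = 1 ∧ ∀ p ∈ invSet α,
        (p.2 : ℕ) = (p.1 : ℕ) + 1 ∧ α.get p.2 = α.get p.1 + 1)) ∧
    (∀ β : List ℕ, β ≠ α →
      (∀ b : List ℕ, keyCoeff α b = fundCoeff α b + fundCoeff β b) →
      β.Perm α ∧ List.Pairwise (· ≥ ·) β) := by
  refine ⟨⟨fun ⟨β, hβ, hid⟩ => ?_, fun hinv => ?_⟩, fun β hβ hid => ?_⟩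
  · obtain ⟨i, hs, -⟩ := isSoleInversionAt_of_keyCoeff hpos hβ hid
    exact exists_isSoleInversionAt_iff.mp ⟨i, hs⟩
  · obtain ⟨i, hs⟩ := exists_isSoleInversionAt_iff.mpr hinv
    refine ⟨swapAdj α (i - 1), hs.swapAdj_ne, fun b => ?_⟩
    rw [hs.keyCoeff_eq, fundCoeff_of_pos hpos,
      fundCoeff_of_pos fun x hx => hpos x (hs.perm_swapAdj.subset hx)]
  · obtain ⟨i, hs, rfl⟩ := isSoleInversionAt_of_keyCoeff hpos hβ hid
    exact ⟨hs.perm_swapAdj, hs.pairwise_swapAdj⟩
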